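/- arXiv:1407.5031 — 2 statements merged into one kernel-verified Lean document; each statement's English description precedes it below -/
import Mathlib

section
/- Let U and E be real vector spaces and let J : U × E → ℝ be a nonnegative function that is jointly square-homogeneous (J(c•u, c•x) = c²·J(u,x) for all c ∈ ℝ, u ∈ U, x ∈ E) and satisfies the joint parallelogram law: J(u+v, x+y) + J(u−v, x−y) = 2·J(u,x) + 2·J(v,y) for all u, v ∈ U and x, y ∈ E. Define V(x) := ⨅_{u ∈ U} J(u, x) and assume that for every x ∈ E the infimum is attained, i.e. there exists u(x) ∈ U with J(u(x), x) = V(x). Then V satisfies the parallelogram law: V(x+y) + V(x−y) = 2·V(x) + 2·V(y) for all x, y ∈ E. -/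
/-!
Minimizers `a` of `J (·, x + y)` and `b` of `J (·, x - y)` give, through the parallelogram law
for `J` applied to `(a + b) / 2` and `(a - b) / 2`, admissible controls for `x` and `y`; this
gives `2 V x + 2 V y ≤ V (x + y) + V (x - y)`. Conversely, the sum and difference of minimizers
for `x` and `y` are admissible for `x + y` and `x - y`, which gives the reverse inequality.
-/

section ParallelogramValue

variable {U E : Type*} [AddCommGroup U] [AddCommGroup E] {J : U × E → ℝ} {V : E → ℝ}

theorem value_add_add_value_sub_le
    (hJ_par : ∀ (u v : U) (x y : E),
      J (u + v, x + y) + J (u - v, x - y) = 2 * J (u, x) + 2 * J (v, y))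
    (hV : ∀ x, IsLeast (Set.range fun u => J (u, x)) (V x)) (x y : E) :
    V (x + y) + V (x - y) ≤ 2 * V x + 2 * V y := by
  obtain ⟨⟨ux, hux⟩, -⟩ := hV x
  obtain ⟨⟨uy, huy⟩, -⟩ := hV y
  have hsum : V (x + y) ≤ J (ux + uy, x + y) := (hV (x + y)).2 ⟨_, rfl⟩
  have hdiff : V (x - y) ≤ J (ux - uy, x - y) := (hV (x - y)).2 ⟨_, rfl⟩
  have := hJ_par ux uy x y
  simp only at hux huy
  linarith

theorem le_value_add_add_value_sub [Module ℝ U]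
    (hJ_par : ∀ (u v : U) (x y : E),
      J (u + v, x + y) + J (u - v, x - y) = 2 * J (u, x) + 2 * J (v, y))
    (hV : ∀ x, IsLeast (Set.range fun u => J (u, x)) (V x)) (x y : E) :
    2 * V x + 2 * V y ≤ V (x + y) + V (x - y) := by
  obtain ⟨⟨a, ha⟩, -⟩ := hV (x + y)
  obtain ⟨⟨b, hb⟩, -⟩ := hV (x - y)
  set u : U := (1 / 2 : ℝ) • (a + b)
  set v : U := (1 / 2 : ℝ) • (a - b)
  have hJ_uv : J (a, x + y) + J (b, x - y) = 2 * J (u, x) + 2 * J (v, y) := by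
    have hadd : u + v = a := by module
    have hsub : u - v = b := by module
    rw [← hJ_par, hadd, hsub]
  have hx : V x ≤ J (u, x) := (hV x).2 ⟨_, rfl⟩
  have hy : V y ≤ J (v, y) := (hV y).2 ⟨_, rfl⟩
  simp only at ha hb
  linarith

theorem value_parallelogram_of_isLeast [Module ℝ U]
    (hJ_par : ∀ (u v : U) (x y : E),
      J (u + v, x + y) + J (u - v, x - y) = 2 * J (u, x) + 2 * J (v, y))
    (hV : ∀ x, IsLeast (Set.range fun u => J (u, x)) (V x)) (x y : E) :
    V (x + y) + V (x - y) = 2 * V x + 2 * V y :=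
  le_antisymm (value_add_add_value_sub_le hJ_par hV x y) (le_value_add_add_value_sub hJ_par hV x y)

end ParallelogramValue

theorem value_field_parallelogram_general
    {U E : Type*} [AddCommGroup U] [Module ℝ U] [AddCommGroup E]
    (J : U × E → ℝ)
    (hJ_nonneg : ∀ (u : U) (x : E), 0 ≤ J (u, x))
    (hJ_par : ∀ (u v : U) (x y : E),
      J (u + v, x + y) + J (u - v, x - y) = 2 * J (u, x) + 2 * J (v, y))
    (V : E → ℝ) (hV : ∀ x : E, V x = ⨅ u : U, J (u, x))
    (hattain : ∀ x : E, ∃ u : U, J (u, x) = V x) :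
    ∀ x y : E, V (x + y) + V (x - y) = 2 * V x + 2 * V y := by
  have hleast : ∀ x, IsLeast (Set.range fun u => J (u, x)) (V x) := by
    intro x
    have hbdd : BddBelow (Set.range fun u => J (u, x)) :=
      ⟨0, by rintro _ ⟨u, rfl⟩; exact hJ_nonneg u x⟩
    exact ⟨hattain x, hV x ▸ (isGLB_ciInf hbdd).1⟩
  exact value_parallelogram_of_isLeast hJ_par hleast

/-- The value function `V x = ⨅ u, J (u, x)` of a nonnegative, jointly
square-homogeneous cost `J` satisfying the joint parallelogram law, whose infimum is
attained for every `x`, itself satisfies the parallelogram law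
`V (x+y) + V (x-y) = 2 V x + 2 V y`. -/
theorem value_field_parallelogram
    {U E : Type*} [AddCommGroup U] [Module ℝ U] [AddCommGroup E] [Module ℝ E]
    (J : U × E → ℝ)
    (hJ_nonneg : ∀ (u : U) (x : E), 0 ≤ J (u, x))
    (hJ_hom : ∀ (c : ℝ) (u : U) (x : E), J (c • u, c • x) = c ^ 2 * J (u, x))
    (hJ_par : ∀ (u v : U) (x y : E),
      J (u + v, x + y) + J (u - v, x - y) = 2 * J (u, x) + 2 * J (v, y))
    (V : E → ℝ) (hV : ∀ x : E, V x = ⨅ u : U, J (u, x))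
    (hattain : ∀ x : E, ∃ u : U, J (u, x) = V x) :
    ∀ x y : E, V (x + y) + V (x - y) = 2 * V x + 2 * V y :=
  value_field_parallelogram_general J hJ_nonneg hJ_par V hV hattain
end

section
/- Let U be a real vector space and let q : U × ℝⁿ → ℝ be a nonnegative function that is jointly square-homogeneous (q(c•u, c•x) = c²·q(u,x) for all c ∈ ℝ) and satisfies the joint parallelogram law (q(u+v, x+y) + q(u−v, x−y) = 2·q(u,x) + 2·q(v,y)). Assume there is a constant λ ≥ 0 with q(0, x) ≤ λ·‖x‖² for all x ∈ ℝⁿ, and that for every x ∈ ℝⁿ there exists u(x) ∈ U with q(u(x), x) = ⨅_{u ∈ U} q(u, x). Then there exists a symmetric positive semidefinite n×n real matrix K with ⟨K x, x⟩ ≤ λ·‖x‖² for all x, such that ⨅_{u ∈ U} q(u, x) = ⟨K x, x⟩ for every x ∈ ℝⁿ. -/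
/-!
Choosing minimisers `u x`, `u y` in the joint parallelogram law for `q` shows that the value
function `V x = ⨅ u, q (u, x)` satisfies `V (x + y) + V (x - y) ≤ 2 V x + 2 V y`; applied to
`x ± y` and combined with `V (2 x) = 4 V x` this becomes an equality. As in the
Jordan–von Neumann theorem, the parallelogram law makes `B x y = (V (x + y) - V (x - y)) / 4`
symmetric and biadditive with `B x x = V x`. The bounds `0 ≤ V x ≤ λ ‖x‖²` make `B · y` bounded
near `0`, hence continuous and therefore `ℝ`-linear; `K` is the matrix of `B`.
-/

open Matrix Metric

section Parallelogram

variable {E : Type*} [AddCommGroup E] {V : E → ℝ}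

noncomputable def polarization (V : E → ℝ) (x y : E) : ℝ := (V (x + y) - V (x - y)) / 4

theorem map_zero_of_parallelogram (hV : ∀ x y, V (x + y) + V (x - y) = 2 * V x + 2 * V y) :
    V 0 = 0 := by
  have := hV 0 0
  simp only [add_zero, sub_zero] at this
  linarith

theorem map_neg_of_parallelogram (hV : ∀ x y, V (x + y) + V (x - y) = 2 * V x + 2 * V y)
    (x : E) : V (-x) = V x := by
  have := hV 0 x
  rw [zero_add, zero_sub, map_zero_of_parallelogram hV] at this
  linarith

theorem polarization_self (hV : ∀ x y, V (x + y) + V (x - y) = 2 * V x + 2 * V y) (x : E) :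
    polarization V x x = V x := by
  have := hV x x
  rw [polarization, sub_self, map_zero_of_parallelogram hV] at *
  linarith

theorem polarization_comm (hV : ∀ x y, V (x + y) + V (x - y) = 2 * V x + 2 * V y) (x y : E) :
    polarization V x y = polarization V y x := by
  rw [polarization, polarization, add_comm, ← neg_sub y x, map_neg_of_parallelogram hV]

theorem polarization_neg_left (hV : ∀ x y, V (x + y) + V (x - y) = 2 * V x + 2 * V y)
    (x y : E) : polarization V (-x) y = -polarization V x y := by
  rw [polarization, polarization, neg_add_eq_sub, ← neg_sub x y, ← neg_add',
    map_neg_of_parallelogram hV, map_neg_of_parallelogram hV]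
  ring

theorem polarization_add_left (hV : ∀ x y, V (x + y) + V (x - y) = 2 * V x + 2 * V y)
    (x x' y : E) : polarization V (x + x') y = polarization V x y + polarization V x' y := by
  have hmid : ∀ a b,
      polarization V (a + b) y + polarization V (a - b) y = 2 * polarization V a y := by
    intro a b
    have h₁ := hV (a + y) b
    have h₂ := hV (a - y) b
    simp only [polarization]
    rw [show a + b + y = a + y + b by abel, show a - b + y = a + y - b by abel,
      show a + b - y = a - y + b by abel, show a - b - y = a - y - b by abel]
    linarith
  have h₁ := hmid x x'
  have h₂ := hmid x' x
  rw [add_comm x' x, ← neg_sub x x', polarization_neg_left hV] at h₂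
  linarith

end Parallelogram

section Continuity

variable {E : Type*} [SeminormedAddCommGroup E] [NormedSpace ℝ E] {V : E → ℝ}

theorem polarization_smul_left (hV : ∀ x y, V (x + y) + V (x - y) = 2 * V x + 2 * V y)
    (hbdd : ∀ r, ∃ C, ∀ x ∈ closedBall (0 : E) r, |V x| ≤ C) (c : ℝ) (x y : E) :
    polarization V (c • x) y = c * polarization V x y := by
  let f : E →+ ℝ := AddMonoidHom.mk' (polarization V · y) (polarization_add_left hV · · y)
  obtain ⟨C, hC⟩ := hbdd (1 + ‖y‖)
  have hf_bdd : Bornology.IsBounded (f '' ball 0 1) := by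
    refine isBounded_iff_forall_norm_le.2 ⟨C / 2, ?_⟩
    rintro _ ⟨z, hz, rfl⟩
    rw [mem_ball_zero_iff] at hz
    have hplus := hC (z + y) (mem_closedBall_zero_iff.2 ((norm_add_le z y).trans (by linarith)))
    have hminus := hC (z - y) (mem_closedBall_zero_iff.2 ((norm_sub_le z y).trans (by linarith)))
    rw [Real.norm_eq_abs, AddMonoidHom.mk'_apply, polarization, abs_le]
    rw [abs_le] at hplus hminus
    constructor <;> linarith
  exact map_real_smul f (f.continuous_of_isBounded_nhds_zero (ball_mem_nhds 0 one_pos) hf_bdd) c x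

theorem exists_isSymm_bilinForm_of_parallelogram
    (hV : ∀ x y, V (x + y) + V (x - y) = 2 * V x + 2 * V y)
    (hbdd : ∀ r, ∃ C, ∀ x ∈ closedBall (0 : E) r, |V x| ≤ C) :
    ∃ B : LinearMap.BilinForm ℝ E, B.IsSymm ∧ ∀ x, B x x = V x := by
  have hcomm := polarization_comm hV
  refine ⟨LinearMap.mk₂ ℝ (polarization V) (polarization_add_left hV)
    (polarization_smul_left hV hbdd) (fun x y y' => ?_) (fun c x y => ?_),
    ⟨hcomm⟩, polarization_self hV⟩
  · rw [hcomm, polarization_add_left hV, hcomm, hcomm y']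
  · rw [hcomm, polarization_smul_left hV hbdd, hcomm, smul_eq_mul]

end Continuity

section ValueFunction

variable {U X : Type*} {q : U × X → ℝ}

noncomputable def valueFunction (q : U × X → ℝ) (x : X) : ℝ := ⨅ u, q (u, x)

theorem valueFunction_nonneg [Nonempty U] (hq_nonneg : ∀ u x, 0 ≤ q (u, x)) (x : X) :
    0 ≤ valueFunction q x :=
  le_ciInf fun u => hq_nonneg u x

theorem valueFunction_le (hq_nonneg : ∀ u x, 0 ≤ q (u, x)) (u : U) (x : X) :
    valueFunction q x ≤ q (u, x) :=
  ciInf_le ⟨0, by rintro _ ⟨w, rfl⟩; exact hq_nonneg w x⟩ u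

variable [AddCommGroup U] [Module ℝ U] [AddCommGroup X] [Module ℝ X]

theorem valueFunction_smul_le (hq_nonneg : ∀ u x, 0 ≤ q (u, x))
    (hq_hom : ∀ (c : ℝ) u x, q (c • u, c • x) = c ^ 2 * q (u, x))
    (hattain : ∀ x, ∃ u, q (u, x) = valueFunction q x) (c : ℝ) (x : X) :
    valueFunction q (c • x) ≤ c ^ 2 * valueFunction q x := by
  obtain ⟨u, hu⟩ := hattain x
  calc valueFunction q (c • x) ≤ q (c • u, c • x) := valueFunction_le hq_nonneg _ _
    _ = c ^ 2 * valueFunction q x := by rw [hq_hom, hu]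

theorem valueFunction_smul (hq_nonneg : ∀ u x, 0 ≤ q (u, x))
    (hq_hom : ∀ (c : ℝ) u x, q (c • u, c • x) = c ^ 2 * q (u, x))
    (hattain : ∀ x, ∃ u, q (u, x) = valueFunction q x) (c : ℝ) (x : X) :
    valueFunction q (c • x) = c ^ 2 * valueFunction q x := by
  refine (valueFunction_smul_le hq_nonneg hq_hom hattain c x).antisymm ?_
  rcases eq_or_ne c 0 with rfl | hc
  · simpa using valueFunction_nonneg hq_nonneg _
  · have h := valueFunction_smul_le hq_nonneg hq_hom hattain c⁻¹ (c • x)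
    rw [inv_smul_smul₀ hc, inv_pow] at h
    rwa [le_inv_mul_iff₀ (by positivity)] at h

theorem valueFunction_parallelogram (hq_nonneg : ∀ u x, 0 ≤ q (u, x))
    (hq_hom : ∀ (c : ℝ) u x, q (c • u, c • x) = c ^ 2 * q (u, x))
    (hq_par : ∀ u v x y, q (u + v, x + y) + q (u - v, x - y) = 2 * q (u, x) + 2 * q (v, y))
    (hattain : ∀ x, ∃ u, q (u, x) = valueFunction q x) (x y : X) :
    valueFunction q (x + y) + valueFunction q (x - y) =
      2 * valueFunction q x + 2 * valueFunction q y := by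
  have hle : ∀ x y : X, valueFunction q (x + y) + valueFunction q (x - y) ≤
      2 * valueFunction q x + 2 * valueFunction q y := by
    intro x y
    obtain ⟨u, hu⟩ := hattain x
    obtain ⟨v, hv⟩ := hattain y
    rw [← hu, ← hv, ← hq_par]
    exact add_le_add (valueFunction_le hq_nonneg _ _) (valueFunction_le hq_nonneg _ _)
  -- the reverse inequality is `hle` at `x + y` and `x - y`, halved by homogeneity
  have h := hle (x + y) (x - y)
  rw [add_add_sub_cancel, add_sub_sub_cancel, ← two_smul ℝ x, ← two_smul ℝ y,
    valueFunction_smul hq_nonneg hq_hom hattain,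
    valueFunction_smul hq_nonneg hq_hom hattain] at h
  linarith [hle x y]

end ValueFunction

theorem exists_abs_le_on_closedBall_of_le_dotProduct {ι : Type*} [Fintype ι]
    {V : (ι → ℝ) → ℝ} {lam : ℝ} (h_nonneg : ∀ x, 0 ≤ V x) (h_le : ∀ x, V x ≤ lam * (x ⬝ᵥ x))
    (r : ℝ) : ∃ C, ∀ x ∈ closedBall (0 : ι → ℝ) r, |V x| ≤ C := by
  obtain ⟨C, hC⟩ := (isCompact_closedBall (0 : ι → ℝ) r).exists_bound_of_continuousOn
    (f := fun x => lam * (x ⬝ᵥ x)) (by fun_prop)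
  exact ⟨C, fun x hx => (abs_of_nonneg (h_nonneg x)).trans_le
    ((h_le x).trans ((le_abs_self _).trans (hC x hx)))⟩

theorem LinearMap.BilinForm.toMatrix'_mulVec_dotProduct_self {R n : Type*} [CommRing R]
    [Fintype n] [DecidableEq n] (B : LinearMap.BilinForm R (n → R)) (x : n → R) :
    B.toMatrix' *ᵥ x ⬝ᵥ x = B x x := by
  rw [dotProduct_comm, ← Matrix.toBilin'_apply', Matrix.toBilin'_toMatrix']

theorem value_field_is_quadratic_form_general
    {U : Type*} [AddCommGroup U] [Module ℝ U] {n : ℕ}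
    (q : U × (Fin n → ℝ) → ℝ) (lam : ℝ)
    (hq_nonneg : ∀ (u : U) (x : Fin n → ℝ), 0 ≤ q (u, x))
    (hq_hom : ∀ (c : ℝ) (u : U) (x : Fin n → ℝ), q (c • u, c • x) = c ^ 2 * q (u, x))
    (hq_par : ∀ (u v : U) (x y : Fin n → ℝ),
      q (u + v, x + y) + q (u - v, x - y) = 2 * q (u, x) + 2 * q (v, y))
    (hq_bd : ∀ x : Fin n → ℝ, q (0, x) ≤ lam * (x ⬝ᵥ x))
    (hattain : ∀ x : Fin n → ℝ, ∃ u : U, q (u, x) = ⨅ w : U, q (w, x)) :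
    ∃ K : Matrix (Fin n) (Fin n) ℝ,
      K.IsSymm ∧ K.PosSemidef ∧
      (∀ x : Fin n → ℝ, K.mulVec x ⬝ᵥ x ≤ lam * (x ⬝ᵥ x)) ∧
      (∀ x : Fin n → ℝ, (⨅ u : U, q (u, x)) = K.mulVec x ⬝ᵥ x) := by
  have hV_nonneg := valueFunction_nonneg hq_nonneg
  have hV_le : ∀ x, valueFunction q x ≤ lam * (x ⬝ᵥ x) := fun x =>
    (valueFunction_le hq_nonneg 0 x).trans (hq_bd x)
  obtain ⟨B, hB_symm, hB⟩ := exists_isSymm_bilinForm_of_parallelogram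
    (valueFunction_parallelogram hq_nonneg hq_hom hq_par hattain)
    (exists_abs_le_on_closedBall_of_le_dotProduct hV_nonneg hV_le)
  have hK : ∀ x, B.toMatrix' *ᵥ x ⬝ᵥ x = valueFunction q x := fun x => by
    rw [B.toMatrix'_mulVec_dotProduct_self, hB]
  have hK_symm := LinearMap.BilinForm.isSymm_toMatrix'_iff_isSymm.2 hB_symm
  refine ⟨B.toMatrix', hK_symm,
    posSemidef_iff_dotProduct_mulVec.2 ⟨isHermitian_iff_isSymm.2 hK_symm, fun x => ?_⟩,
    fun x => hK x ▸ hV_le x, fun x => (hK x).symm⟩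
  rw [star_trivial, dotProduct_comm, hK]
  exact hV_nonneg x

/-- The value function `x ↦ ⨅ u, q (u, x)` of a nonnegative, jointly
square-homogeneous cost `q` satisfying the joint parallelogram law, with
`q (0, x) ≤ λ ‖x‖²` and attained infima, is a quadratic form `⟨K x, x⟩` for a symmetric
positive semidefinite matrix `K` with `⟨K x, x⟩ ≤ λ ‖x‖²`. -/
theorem value_field_is_quadratic_form
    {U : Type*} [AddCommGroup U] [Module ℝ U] {n : ℕ} (hn : 0 < n)
    (q : U × (Fin n → ℝ) → ℝ) (lam : ℝ) (hlam : 0 ≤ lam)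
    (hq_nonneg : ∀ (u : U) (x : Fin n → ℝ), 0 ≤ q (u, x))
    (hq_hom : ∀ (c : ℝ) (u : U) (x : Fin n → ℝ), q (c • u, c • x) = c ^ 2 * q (u, x))
    (hq_par : ∀ (u v : U) (x y : Fin n → ℝ),
      q (u + v, x + y) + q (u - v, x - y) = 2 * q (u, x) + 2 * q (v, y))
    (hq_bd : ∀ x : Fin n → ℝ, q (0, x) ≤ lam * (x ⬝ᵥ x))
    (hattain : ∀ x : Fin n → ℝ, ∃ u : U, q (u, x) = ⨅ w : U, q (w, x)) :
    ∃ K : Matrix (Fin n) (Fin n) ℝ,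
      K.IsSymm ∧ K.PosSemidef ∧
      (∀ x : Fin n → ℝ, K.mulVec x ⬝ᵥ x ≤ lam * (x ⬝ᵥ x)) ∧
      (∀ x : Fin n → ℝ, (⨅ u : U, q (u, x)) = K.mulVec x ⬝ᵥ x) :=
  value_field_is_quadratic_form_general q lam hq_nonneg hq_hom hq_par hq_bd hattain
end
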